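/- arXiv:1101.4636 — 2 statements merged into one kernel-verified Lean document; each statement's English description precedes it below -/
import Mathlib

section
/- For a finite word w and an integer n, if p_w(n+1) ≤ p_w(n), then p_w(m) ≤ p_w(n) for all m ≥ n. -/
open List Real Filter

/-- The list of length-`n` windows (contiguous subwords) of `w`. -/
def windows4 (w : List (Fin 4)) (n : ℕ) : List (List (Fin 4)) :=
  (List.range (w.length + 1 - n)).map (fun i => (w.drop i).take n)

/-- The complexity function: number of distinct length-`n` contiguous subwords of `w`. -/
def compl4 (w : List (Fin 4)) (n : ℕ) : ℕ := (windows4 w n).toFinset.card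

/-- Topological entropy of a finite word, computed at word length `n`. -/
noncomputable def Htop4 (w : List (Fin 4)) (n : ℕ) : ℝ :=
  Real.logb 4 (compl4 w n) / n

namespace Stmt8

variable (w : List (Fin 4))

def F (k : ℕ) : Finset (List (Fin 4)) := (windows4 w k).toFinset

def W (i k : ℕ) : List (Fin 4) := (w.drop i).take k

def ext (n : ℕ) (u : List (Fin 4)) : Finset (Fin 4) :=
  Finset.univ.filter (fun a => u ++ [a] ∈ F w (n + 1))

def e (n : ℕ) (u : List (Fin 4)) : ℕ := (ext w n u).card

variable {w}

lemma mem_F {u : List (Fin 4)} {k : ℕ} :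
    u ∈ F w k ↔ ∃ i, i + k ≤ w.length ∧ W w i k = u := by
  simp only [F, windows4, List.mem_toFinset, List.mem_map, List.mem_range, W]
  constructor
  · rintro ⟨i, hi, rfl⟩; exact ⟨i, by omega, rfl⟩
  · rintro ⟨i, hi, rfl⟩; exact ⟨i, by omega, rfl⟩

lemma W_mem {i k : ℕ} (h : i + k ≤ w.length) : W w i k ∈ F w k :=
  mem_F.mpr ⟨i, h, rfl⟩

lemma W_length {i k : ℕ} (h : i + k ≤ w.length) : (W w i k).length = k := by
  simp only [W, List.length_take, List.length_drop]; omega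

lemma length_of_mem_F {u : List (Fin 4)} {k : ℕ} (h : u ∈ F w k) : u.length = k := by
  obtain ⟨i, hi, rfl⟩ := mem_F.mp h; exact W_length hi

lemma W_succ {i k : ℕ} (h : i + k < w.length) :
    W w i (k + 1) = W w i k ++ [w[i + k]'h] := by
  simp only [W]
  rw [List.take_succ]
  congr 1
  have h2 : k < (w.drop i).length := by simp [List.length_drop]; omega
  rw [List.getElem?_drop]
  simp [List.getElem?_eq_getElem h]

lemma W_tail {i k : ℕ} : (W w i (k + 1)).tail = W w (i + 1) k := by
  simp only [W]
  have : ((w.drop i).take (k + 1)).tail = (w.drop i).tail.take k := by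
    cases w.drop i <;> simp
  rw [this, List.tail_drop]

lemma tail_mem {v : List (Fin 4)} {k : ℕ} (h : v ∈ F w (k + 1)) : v.tail ∈ F w k := by
  obtain ⟨i, hi, rfl⟩ := mem_F.mp h
  rw [W_tail]
  exact W_mem (by omega)

lemma dropLast_mem {v : List (Fin 4)} {k : ℕ} (h : v ∈ F w (k + 1)) : v.dropLast ∈ F w k := by
  obtain ⟨i, hi, rfl⟩ := mem_F.mp h
  rw [W_succ (by omega), List.dropLast_concat]
  exact W_mem (by omega)

lemma card_F_succ (n : ℕ) : (F w (n + 1)).card = ∑ u ∈ F w n, e w n u := by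
  rw [Finset.card_eq_sum_card_fiberwise (f := List.dropLast) (t := F w n)
    (fun v hv => dropLast_mem hv)]
  refine Finset.sum_congr rfl (fun u hu => ?_)
  have hfib : Finset.filter (fun v => v.dropLast = u) (F w (n + 1))
      = (ext w n u).image (fun a => u ++ [a]) := by
    ext v
    simp only [Finset.mem_filter, Finset.mem_image, ext, Finset.mem_univ, true_and]
    constructor
    · rintro ⟨hvF, rfl⟩
      have hne : v ≠ [] := by
        intro h; subst h; have := length_of_mem_F hvF; simp at this
      refine ⟨v.getLast hne, ?_, List.dropLast_append_getLast hne⟩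
      rw [List.dropLast_append_getLast hne]; exact hvF
    · rintro ⟨a, haF, rfl⟩
      exact ⟨haF, List.dropLast_concat⟩
  rw [hfib, Finset.card_image_of_injective _ (fun a b hab => by simpa using hab)]
  rfl

lemma compl4_eq (k : ℕ) : compl4 w k = (F w k).card := rfl

/-- extensions of a longer factor inject into extensions of its tail -/
lemma ext_subset_tail {v : List (Fin 4)} {n : ℕ} (hv : v ∈ F w (n + 1)) :
    ext w (n + 1) v ⊆ ext w n v.tail := by
  intro a ha
  simp only [ext, Finset.mem_filter] at ha ⊢
  refine ⟨Finset.mem_univ _, ?_⟩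
  have hne : v ≠ [] := by
    intro h; subst h; have := length_of_mem_F hv; simp at this
  have : v.tail ++ [a] = (v ++ [a]).tail := by
    cases v with
    | nil => exact absurd rfl hne
    | cons x xs => simp
  rw [this]
  exact tail_mem ha.2

lemma e_le_tail {v : List (Fin 4)} {n : ℕ} (hv : v ∈ F w (n + 1)) :
    e w (n + 1) v ≤ e w n v.tail :=
  Finset.card_le_card (ext_subset_tail hv)

/-- if e u = 0 then u occurs only at the very end -/
lemma e_zero_occ {u : List (Fin 4)} {n : ℕ} (he : e w n u = 0) :
    ∀ j, j + n < w.length → W w j n ≠ u := by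
  intro j hj hWj
  have : w[j + n]'hj ∈ ext w n u := by
    simp only [ext, Finset.mem_filter]
    refine ⟨Finset.mem_univ _, ?_⟩
    rw [← hWj, ← W_succ hj]
    exact W_mem (by omega)
  rw [e, Finset.card_eq_zero] at he
  rw [he] at this
  exact absurd this (Finset.notMem_empty _)

lemma e_zero_eq {u : List (Fin 4)} {n : ℕ} (hu : u ∈ F w n) (he : e w n u = 0) :
    n ≤ w.length ∧ u = W w (w.length - n) n := by
  obtain ⟨i, hi, rfl⟩ := mem_F.mp hu
  have : i + n = w.length := by
    by_contra hlt
    exact e_zero_occ he i (by omega) rfl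
  constructor
  · omega
  · congr 1; omega

lemma W_cons {i k : ℕ} (h : i < w.length) :
    W w i (k + 1) = w[i]'h :: W w (i + 1) k := by
  simp only [W]
  rw [List.drop_eq_getElem_cons h, List.take_succ_cons]

/-- decompose an occurrence of `u₀ ++ [x]` -/
lemma occ_decomp {j n : ℕ} {u₀ : List (Fin 4)} {x : Fin 4} (hu : u₀.length = n)
    (hjL : j + (n + 1) ≤ w.length) (hocc : W w j (n + 1) = u₀ ++ [x]) :
    W w j n = u₀ ∧ ∀ (h : j + n < w.length), w[j + n]'h = x := by
  have hjn : j + n < w.length := by omega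
  rw [W_succ hjn] at hocc
  have := List.append_inj hocc (by rw [W_length (by omega), hu])
  refine ⟨this.1, fun h => ?_⟩
  have := this.2
  simp at this
  exact this

lemma at_most_one_special {n : ℕ} {u₀ z : List (Fin 4)}
    (hzF : z ∈ F w n) (hez : e w n z = 0)
    (h1 : ∀ u ∈ F w n, 2 ≤ e w n u → u = u₀) (heu : e w n u₀ ≤ 2) :
    ∀ v₁ ∈ F w (n + 1), ∀ v₂ ∈ F w (n + 1),
      2 ≤ e w (n + 1) v₁ → 2 ≤ e w (n + 1) v₂ → v₁ = v₂ := by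
  intro v₁ hv₁ v₂ hv₂ hs₁ hs₂
  by_contra hne
  set L := w.length with hL
  obtain ⟨hnL, hzW⟩ := e_zero_eq hzF hez
  -- tails are u₀
  have ht₁ : v₁.tail = u₀ := h1 _ (tail_mem hv₁) (le_trans hs₁ (e_le_tail hv₁))
  have ht₂ : v₂.tail = u₀ := h1 _ (tail_mem hv₂) (le_trans hs₂ (e_le_tail hv₂))
  have hlen₁ := length_of_mem_F hv₁
  have hlen₂ := length_of_mem_F hv₂
  have hne₁ : v₁ ≠ [] := by intro hh; rw [hh] at hlen₁; simp at hlen₁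
  have hne₂ : v₂ ≠ [] := by intro hh; rw [hh] at hlen₂; simp at hlen₂
  have hu₀len : u₀.length = n := by rw [← ht₁]; simp [List.length_tail, hlen₁]
  -- ext sets equal to ext u₀
  have hsub₁ : ext w (n + 1) v₁ ⊆ ext w n u₀ := ht₁ ▸ ext_subset_tail hv₁
  have hsub₂ : ext w (n + 1) v₂ ⊆ ext w n u₀ := ht₂ ▸ ext_subset_tail hv₂
  have hext₁ : ext w (n + 1) v₁ = ext w n u₀ :=
    Finset.eq_of_subset_of_card_le hsub₁ (le_trans heu hs₁)
  have hext₂ : ext w (n + 1) v₂ = ext w n u₀ :=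
    Finset.eq_of_subset_of_card_le hsub₂ (le_trans heu hs₂)
  have heu2 : e w n u₀ = 2 := le_antisymm heu (by rw [e, ← hext₁]; exact hs₁)
  obtain ⟨c, d, hcd, hextset⟩ := Finset.card_eq_two.mp heu2
  -- heads differ
  have hab : v₁.head hne₁ ≠ v₂.head hne₂ := by
    intro hh
    apply hne
    rw [← List.cons_head_tail hne₁, ← List.cons_head_tail hne₂, hh, ht₁, ht₂]
  -- occurrences of u₀ followed by letter x, preceded by given head
  have hocc : ∀ x ∈ ext w n u₀, ∀ (v : List (Fin 4)) (hv : v ∈ F w (n+1)),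
      v.tail = u₀ → ext w (n+1) v = ext w n u₀ →
      ∃ j, 1 ≤ j ∧ j + (n + 1) ≤ L ∧ W w j n = u₀ ∧
        (∀ (h : j + n < L), w[j + n]'h = x) ∧
        (∀ (h : j - 1 < L), w[j-1]'h = v.head (by
          intro hh; have := length_of_mem_F hv; rw [hh] at this; simp at this)) := by
    intro x hx v hv htv hextv
    have hxv : x ∈ ext w (n + 1) v := hextv ▸ hx
    simp only [ext, Finset.mem_filter] at hxv
    obtain ⟨p, hp, hWp⟩ := mem_F.mp hxv.2
    have hvne : v ≠ [] := by
      intro hh; have := length_of_mem_F hv; rw [hh] at this; simp at this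
    have hpL : p < L := by omega
    rw [W_cons hpL] at hWp
    have hvdec : v ++ [x] = v.head hvne :: (u₀ ++ [x]) := by
      conv_lhs => rw [← List.cons_head_tail hvne]
      rw [htv]; simp
    rw [hvdec] at hWp
    have hhead : w[p]'hpL = v.head hvne := (List.cons.injEq _ _ _ _ ▸ hWp).1
    have hrest : W w (p + 1) (n + 1) = u₀ ++ [x] := (List.cons.injEq _ _ _ _ ▸ hWp).2
    obtain ⟨hW', hx'⟩ := occ_decomp hu₀len (by omega) hrest
    refine ⟨p + 1, by omega, by omega, hW', hx', fun h => ?_⟩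
    simp only [Nat.add_sub_cancel]
    exact hhead
  -- the set of occurrence positions of u₀
  set P := (Finset.range (L + 1)).filter (fun j => j + n ≤ L ∧ W w j n = u₀) with hP
  have hcmem : c ∈ ext w n u₀ := by rw [hextset]; simp
  have hdmem : d ∈ ext w n u₀ := by rw [hextset]; simp
  obtain ⟨j₁, hj₁1, hj₁L, hj₁W, hj₁x, hj₁h⟩ := hocc c hcmem v₁ hv₁ ht₁ hext₁
  obtain ⟨j₂, hj₂1, hj₂L, hj₂W, hj₂x, hj₂h⟩ := hocc c hcmem v₂ hv₂ ht₂ hext₂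
  obtain ⟨j₃, hj₃1, hj₃L, hj₃W, hj₃x, hj₃h⟩ := hocc d hdmem v₁ hv₁ ht₁ hext₁
  obtain ⟨j₄, hj₄1, hj₄L, hj₄W, hj₄x, hj₄h⟩ := hocc d hdmem v₂ hv₂ ht₂ hext₂
  have hj12 : j₁ ≠ j₂ := by
    intro hh; subst hh; exact hab ((hj₁h (by omega)).symm.trans (hj₂h (by omega)))
  have hj34 : j₃ ≠ j₄ := by
    intro hh; subst hh; exact hab ((hj₃h (by omega)).symm.trans (hj₄h (by omega)))
  have hmemP : ∀ {j}, j + n + 1 ≤ L → W w j n = u₀ → j ∈ P := by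
    intro j hj hW
    simp only [hP, Finset.mem_filter, Finset.mem_range]
    exact ⟨by omega, by omega, hW⟩
  have hPne : P.Nonempty := ⟨j₁, hmemP (by omega) hj₁W⟩
  set q := P.max' hPne with hq
  have hqP : q ∈ P := P.max'_mem hPne
  have hqle : ∀ j ∈ P, j ≤ q := fun j hj => P.le_max' j hj
  simp only [hP, Finset.mem_filter, Finset.mem_range] at hqP
  have hqW : W w q n = u₀ := hqP.2.2
  -- q is not the final position
  have hqlt : q + n < L := by
    rcases Nat.lt_or_ge (q + n) L with hh | hh
    · exact hh
    · exfalso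
      have hqn : q + n = L := by omega
      have : u₀ = z := by
        rw [← hqW, hzW]
        congr 1
        omega
      rw [this] at heu2
      omega
  -- the letter following the last occurrence
  set x := w[q + n]'hqlt with hxdef
  have hxmem : x ∈ ext w n u₀ := by
    simp only [ext, Finset.mem_filter]
    refine ⟨Finset.mem_univ _, ?_⟩
    rw [← hqW, ← W_succ hqlt]
    exact W_mem (by omega)
  -- find an earlier occurrence followed by the same letter
  have hearlier : ∃ i, i < q ∧ W w i n = u₀ ∧ ∀ (h : i + n < L), w[i + n]'h = x := by
    rw [hextset] at hxmem
    simp only [Finset.mem_insert, Finset.mem_singleton] at hxmem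
    rcases hxmem with hxc | hxd
    · rcases eq_or_ne j₁ q with hh | hh
      · refine ⟨j₂, ?_, hj₂W, fun h => by rw [hj₂x h, hxc]⟩
        have := hqle j₂ (hmemP (by omega) hj₂W)
        omega
      · refine ⟨j₁, ?_, hj₁W, fun h => by rw [hj₁x h, hxc]⟩
        have := hqle j₁ (hmemP (by omega) hj₁W)
        omega
    · rcases eq_or_ne j₃ q with hh | hh
      · refine ⟨j₄, ?_, hj₄W, fun h => by rw [hj₄x h, hxd]⟩
        have := hqle j₄ (hmemP (by omega) hj₄W)
        omega
      · refine ⟨j₃, ?_, hj₃W, fun h => by rw [hj₃x h, hxd]⟩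
        have := hqle j₃ (hmemP (by omega) hj₃W)
        omega
  obtain ⟨i, hiq, hiW, hix⟩ := hearlier
  -- the determinism induction
  have claim : ∀ t, q + t + n ≤ L → W w (i + t) n = W w (q + t) n := by
    intro t
    induction t with
    | zero => intro _; rw [Nat.add_zero, Nat.add_zero, hiW, hqW]
    | succ t ih =>
      intro htL
      have hqt : q + t + n ≤ L := by omega
      have hIH := ih hqt
      have hiL : i + t + n < L := by omega
      have hqL : q + t + n < L := by omega
      -- the letters following positions i+t and q+t agree
      have hletters : w[i + t + n]'hiL = w[q + t + n]'hqL := by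
        cases t with
        | zero =>
          simp only [Nat.add_zero]
          exact hix (by omega)
        | succ t' =>
          set y := W w (q + (t' + 1)) n with hy
          have hyF : y ∈ F w n := W_mem (by omega)
          have hyne : y ≠ u₀ := by
            intro hh
            have := hqle (q + (t' + 1)) (hmemP (by omega) (hy ▸ hh))
            omega
          have hey : e w n y ≤ 1 := by
            by_contra hh
            exact hyne (h1 y hyF (by omega))
          have hα : w[i + (t' + 1) + n]'hiL ∈ ext w n y := by
            simp only [ext, Finset.mem_filter]
            refine ⟨Finset.mem_univ _, ?_⟩
            rw [← hIH, ← W_succ hiL]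
            exact W_mem (by omega)
          have hβ : w[q + (t' + 1) + n]'hqL ∈ ext w n y := by
            simp only [ext, Finset.mem_filter]
            refine ⟨Finset.mem_univ _, ?_⟩
            rw [← W_succ hqL]
            exact W_mem (by omega)
          exact Finset.card_le_one.mp hey _ hα _ hβ
      have e1 : W w (i + (t + 1)) n = (W w (i + t) (n + 1)).tail := by
        rw [W_tail, Nat.add_succ]
      have e2 : W w (q + (t + 1)) n = (W w (q + t) (n + 1)).tail := by
        rw [W_tail, Nat.add_succ]
      rw [e1, e2, W_succ hiL, W_succ hqL, hIH, hletters]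
  -- final contradiction
  have hqnL : q + n ≤ L := by omega
  set tstar := L - n - q with htstar
  have h1t : q + tstar + n ≤ L := by omega
  have h2t : q + tstar = L - n := by omega
  have hfin := claim tstar h1t
  rw [h2t, ← hzW] at hfin
  exact e_zero_occ hez (i + tstar) (by omega) hfin

lemma sum_ge_card {s : Finset (List (Fin 4))} {f : List (Fin 4) → ℕ}
    (h : ∀ u ∈ s, 1 ≤ f u) : s.card ≤ ∑ u ∈ s, f u := by
  have := Finset.card_nsmul_le_sum s f 1 h; simpa using this

lemma sum_le_card {s : Finset (List (Fin 4))} {f : List (Fin 4) → ℕ}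
    (h : ∀ u ∈ s, f u ≤ 1) : ∑ u ∈ s, f u ≤ s.card := by
  have := Finset.sum_le_card_nsmul s f 1 h; simpa using this

lemma step (n : ℕ) (h : (F w (n + 1)).card ≤ (F w n).card) :
    (F w (n + 2)).card ≤ (F w (n + 1)).card := by
  have hsum : ∑ u ∈ F w n, e w n u ≤ (F w n).card := by rw [← card_F_succ]; exact h
  rw [show n + 2 = (n + 1) + 1 from rfl, card_F_succ]
  by_cases hA : ∀ u ∈ F w n, e w n u ≤ 1
  · exact sum_le_card (fun v hv => le_trans (e_le_tail hv) (hA _ (tail_mem hv)))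
  push_neg at hA
  obtain ⟨u₀, hu₀F, hu₀2⟩ := hA
  have hu₀2' : 2 ≤ e w n u₀ := hu₀2
  have hsplit := Finset.add_sum_erase _ (e w n) hu₀F
  have hcard : (F w n).card = 1 + ((F w n).erase u₀).card := by
    rw [Finset.card_erase_of_mem hu₀F]
    have h1c : 1 ≤ (F w n).card := Finset.card_pos.mpr ⟨u₀, hu₀F⟩
    omega
  have hz : ∃ z ∈ (F w n).erase u₀, e w n z = 0 := by
    by_contra hno
    push_neg at hno
    have h1le : ∀ u ∈ (F w n).erase u₀, 1 ≤ e w n u := fun u hu => by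
      have := hno u hu; omega
    have := sum_ge_card h1le
    omega
  obtain ⟨z, hzE, hez⟩ := hz
  have hzF : z ∈ F w n := Finset.mem_of_mem_erase hzE
  have hzu₀ : z ≠ u₀ := (Finset.mem_erase.mp hzE).1
  have hzero_uniq : ∀ u ∈ F w n, e w n u = 0 → u = z := by
    intro u hu he0
    rw [(e_zero_eq hu he0).2, (e_zero_eq hzF hez).2]
  have hsplit2 := Finset.add_sum_erase _ (e w n) hzE
  have hrest1 : ∀ u ∈ ((F w n).erase u₀).erase z, 1 ≤ e w n u := by
    intro u hu
    have huF : u ∈ F w n := Finset.mem_of_mem_erase (Finset.mem_of_mem_erase hu)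
    have huz : u ≠ z := (Finset.mem_erase.mp hu).1
    rcases Nat.eq_zero_or_pos (e w n u) with h0 | h1
    · exact absurd (hzero_uniq u huF h0) huz
    · exact h1
  have hrestsum := sum_ge_card hrest1
  have hcard2 : ((F w n).erase u₀).card = 1 + (((F w n).erase u₀).erase z).card := by
    rw [Finset.card_erase_of_mem hzE]
    have h1c : 1 ≤ ((F w n).erase u₀).card := Finset.card_pos.mpr ⟨z, hzE⟩
    omega
  have heu : e w n u₀ ≤ 2 := by omega
  have h1 : ∀ u ∈ F w n, 2 ≤ e w n u → u = u₀ := by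
    intro u huF hu2
    by_contra hneq
    have huz : u ≠ z := by intro hh; rw [hh, hez] at hu2; omega
    have huE : u ∈ ((F w n).erase u₀).erase z :=
      Finset.mem_erase.mpr ⟨huz, Finset.mem_erase.mpr ⟨hneq, huF⟩⟩
    have hsplit3 := Finset.add_sum_erase _ (e w n) huE
    have h3 : ((((F w n).erase u₀).erase z).erase u).card
        ≤ ∑ x ∈ (((F w n).erase u₀).erase z).erase u, e w n x :=
      sum_ge_card (fun v hv => hrest1 v (Finset.mem_of_mem_erase hv))
    have hcard3 : (((F w n).erase u₀).erase z).card
        = 1 + ((((F w n).erase u₀).erase z).erase u).card := by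
      rw [Finset.card_erase_of_mem huE]
      have h1c : 1 ≤ (((F w n).erase u₀).erase z).card := Finset.card_pos.mpr ⟨u, huE⟩
      omega
    omega
  have huniq := at_most_one_special hzF hez h1 heu
  by_cases hB : ∀ v ∈ F w (n + 1), e w (n + 1) v ≤ 1
  · exact sum_le_card hB
  push_neg at hB
  obtain ⟨vs, hvsF, hvs2⟩ := hB
  have hvs2' : 2 ≤ e w (n + 1) vs := hvs2
  obtain ⟨pv, hpv, _⟩ := mem_F.mp hvsF
  have hn1L : n + 1 ≤ w.length := by omega
  set S' := W w (w.length - (n + 1)) (n + 1) with hS'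
  have hS'F : S' ∈ F w (n + 1) := W_mem (by omega)
  have hS'tail : S'.tail = z := by
    rw [hS', W_tail, (e_zero_eq hzF hez).2]
    have harith : w.length - (n + 1) + 1 = w.length - n := by omega
    rw [harith]
  have he'S' : e w (n + 1) S' = 0 := by
    have := e_le_tail hS'F
    rw [hS'tail, hez] at this
    omega
  have hvsS' : vs ≠ S' := by intro hh; rw [hh, he'S'] at hvs2'; omega
  have hS'E : S' ∈ (F w (n + 1)).erase vs := Finset.mem_erase.mpr ⟨Ne.symm hvsS', hS'F⟩
  have hvstail : vs.tail = u₀ := h1 _ (tail_mem hvsF) (le_trans hvs2' (e_le_tail hvsF))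
  have he'vs : e w (n + 1) vs ≤ 2 := by
    have := e_le_tail hvsF; rw [hvstail] at this; omega
  have hsp1 := Finset.add_sum_erase _ (e w (n + 1)) hvsF
  have hsp2 := Finset.add_sum_erase _ (e w (n + 1)) hS'E
  have hrest : ∀ v ∈ ((F w (n + 1)).erase vs).erase S', e w (n + 1) v ≤ 1 := by
    intro v hv
    have hvF : v ∈ F w (n + 1) := Finset.mem_of_mem_erase (Finset.mem_of_mem_erase hv)
    by_contra hh
    push_neg at hh
    exact (Finset.mem_erase.mp (Finset.mem_of_mem_erase hv)).1
      (huniq v hvF vs hvsF (by omega) hvs2')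
  have hrs := sum_le_card hrest
  have hc1 : (F w (n + 1)).card = 1 + ((F w (n + 1)).erase vs).card := by
    rw [Finset.card_erase_of_mem hvsF]
    have h1c : 1 ≤ (F w (n + 1)).card := Finset.card_pos.mpr ⟨vs, hvsF⟩
    omega
  have hc2 : ((F w (n + 1)).erase vs).card = 1 + (((F w (n + 1)).erase vs).erase S').card := by
    rw [Finset.card_erase_of_mem hS'E]
    have h1c : 1 ≤ ((F w (n + 1)).erase vs).card := Finset.card_pos.mpr ⟨S', hS'E⟩
    omega
  omega

lemma mono_step {n : ℕ} (h : compl4 w (n + 1) ≤ compl4 w n) :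
    ∀ m, n ≤ m → compl4 w (m + 1) ≤ compl4 w m := by
  intro m hm
  induction m, hm using Nat.le_induction with
  | base => exact h
  | succ m hm ih => exact step m ih

end Stmt8

theorem stmt_8 (w : List (Fin 4)) (n : ℕ)
    (h : compl4 w (n + 1) ≤ compl4 w n) :
    ∀ m : ℕ, n ≤ m → compl4 w m ≤ compl4 w n := by
  intro m hm
  induction m, hm using Nat.le_induction with
  | base => exact le_refl _
  | succ m hm ih => exact le_trans (Stmt8.mono_step h m hm) ih
end

section
/- For every positive integer n there exists a word of length 4^n + n - 1 over a 4-letter alphabet whose number of distinct length-n subwords is exactly 4^n (i.e., achieving maximal complexity, a de Bruijn-type sequence). -/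
open List Real Filter

/-!
A de Bruijn word of order `m + 1` is spelled by an Eulerian trail of the de Bruijn graph, whose
vertices are the words of length `m` and whose edges are the words of length `m + 1`, each running
from its prefix to its suffix. Rotating a word by one letter turns the in-edges of a vertex into
out-edges of it, and any vertex reaches any other by shifting in letters, so Euler's argument
applies. A longest trail is closed: its last vertex has all its out-edges on the trail and no more
in-edges than out-edges, so the trail must have started there. Being closed, it can be rotated to
end at any vertex it visits, so it contains every edge leaving a visited vertex; by connectivity it
contains every edge.
-/

section EulerianTrail

open scoped Finset

variable {E V : Type*} (src dst : E → V)

structure IsTrail (t : List E) : Prop where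
  nodup : t.Nodup
  isChain : t.IsChain (fun e f => dst e = src f)

structure IsLongestTrail (t : List E) : Prop extends IsTrail src dst t where
  length_le : ∀ s, IsTrail src dst s → s.length ≤ t.length

theorem exists_isLongestTrail [Fintype E] : ∃ t, IsLongestTrail src dst t := by
  classical
  let P k := ∃ t, IsTrail src dst t ∧ t.length = k
  obtain ⟨t, ht, hlen⟩ : P (Nat.findGreatest P (Fintype.card E)) :=
    Nat.findGreatest_spec (Nat.zero_le _) ⟨[], ⟨nodup_nil, isChain_nil⟩, rfl⟩
  exact ⟨t, ht, fun s hs => hlen ▸ Nat.le_findGreatest hs.nodup.length_le_card ⟨s, hs, rfl⟩⟩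

variable {src dst}

theorem IsTrail.append_comm {s t : List E} (h : IsTrail src dst (s ++ t))
    (hclosed : ∀ x ∈ (s ++ t).getLast?, ∀ y ∈ (s ++ t).head?, dst x = src y) :
    IsTrail src dst (t ++ s) := by
  rcases eq_or_ne s [] with rfl | hs
  · simpa using h
  rcases eq_or_ne t [] with rfl | ht
  · simpa using h
  obtain ⟨hs', ht', -⟩ := isChain_append.1 h.isChain
  rw [getLast?_append_of_ne_nil _ ht, head?_append_of_ne_nil _ hs] at hclosed
  exact ⟨perm_append_comm.nodup_iff.1 h.nodup, isChain_append.2 ⟨ht', hs', hclosed⟩⟩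

theorem IsLongestTrail.mem_of_src_eq_dst {t : List E} (ht : IsLongestTrail src dst t) {x g : E}
    (hx : x ∈ t.getLast?) (hg : src g = dst x) : g ∈ t := by
  by_contra hgt
  have hext : IsTrail src dst (t ++ [g]) :=
    ⟨nodup_append.2 ⟨ht.nodup, nodup_singleton g, fun a ha b hb => by
      rw [mem_singleton.1 hb]; rintro rfl; exact hgt ha⟩,
      isChain_append.2 ⟨ht.isChain, isChain_singleton g, by simp_all⟩⟩
  simpa using ht.length_le _ hext

theorem countP_dst_add_ite_eq [DecidableEq V] (v : V) : ∀ (a : E) (l : List E),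
    (a :: l).IsChain (fun e f => dst e = src f) →
    (a :: l).countP (dst · = v) + (if src a = v then 1 else 0) =
      (a :: l).countP (src · = v) + (if dst ((a :: l).getLast (cons_ne_nil a l)) = v then 1 else 0)
  | a, [], _ => by simp only [countP_singleton, getLast_singleton]; split_ifs <;> simp_all
  | a, b :: l, h => by
    have ih := countP_dst_add_ite_eq v b l (isChain_cons_cons.1 h).2
    rw [getLast_cons (cons_ne_nil b l)]
    simp only [countP_cons, decide_eq_true_eq, (isChain_cons_cons.1 h).1] at ih ⊢
    split_ifs at ih ⊢ <;> omega

theorem List.Nodup.countP_le_card_filter [Fintype E] {t : List E} (ht : t.Nodup) (p : E → Prop)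
    [DecidablePred p] : t.countP p ≤ #{e | p e} := by
  classical
  rw [← ht.card_eq_countP]
  exact Finset.card_le_card (Finset.filter_subset_filter _ (Finset.subset_univ _))

theorem List.Nodup.card_filter_le_countP [Fintype E] {t : List E} (ht : t.Nodup) {p : E → Prop}
    [DecidablePred p] (hp : ∀ e, p e → e ∈ t) : #{e | p e} ≤ t.countP p := by
  classical
  rw [← ht.card_eq_countP]
  exact Finset.card_le_card fun e he => by simp_all

variable [Fintype E] [DecidableEq V] (hdeg : ∀ v, #{e | dst e = v} ≤ #{e | src e = v})
include hdeg

theorem IsLongestTrail.dst_getLast_eq_src_head {t : List E} (ht : IsLongestTrail src dst t) :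
    ∀ x ∈ t.getLast?, ∀ y ∈ t.head?, dst x = src y := by
  intro x hx y hy
  obtain ⟨l, rfl⟩ : ∃ l, t = y :: l := by cases t <;> simp_all
  have hxl : (y :: l).getLast (cons_ne_nil y l) = x := by
    simpa [getLast?_eq_some_getLast] using hx
  have hcount := countP_dst_add_ite_eq (dst x) y l ht.isChain
  have hin := ht.nodup.countP_le_card_filter (dst · = dst x)
  have hout := ht.nodup.card_filter_le_countP fun g hg => ht.mem_of_src_eq_dst hx hg
  rw [hxl, if_pos rfl] at hcount
  by_contra hne
  rw [if_neg (Ne.symm hne)] at hcount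
  have := hdeg (dst x)
  omega

theorem IsLongestTrail.append_comm {s t : List E} (h : IsLongestTrail src dst (s ++ t)) :
    IsLongestTrail src dst (t ++ s) :=
  ⟨h.toIsTrail.append_comm (h.dst_getLast_eq_src_head hdeg),
    fun r hr => by simpa [Nat.add_comm] using h.length_le r hr⟩

theorem IsLongestTrail.exists_src_eq_dst {t : List E} (ht : IsLongestTrail src dst t) {e : E}
    (he : e ∈ t) : ∃ f ∈ t, src f = dst e := by
  obtain ⟨s, r, rfl⟩ := append_of_mem he
  have hrot : IsLongestTrail src dst (r ++ (s ++ [e])) :=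
    IsLongestTrail.append_comm hdeg (by simpa using ht)
  obtain ⟨f, hf⟩ : ∃ f, (r ++ (s ++ [e])).head? = some f := by cases r <;> simp
  refine ⟨f, ?_, (hrot.dst_getLast_eq_src_head hdeg e (by simp) f hf).symm⟩
  simpa [or_comm, or_left_comm, or_assoc] using mem_of_mem_head? hf

theorem IsLongestTrail.mem_of_src_eq_src {t : List E} (ht : IsLongestTrail src dst t) {e g : E}
    (he : e ∈ t) (hg : src g = src e) : g ∈ t := by
  obtain ⟨s, r, rfl⟩ := append_of_mem he
  have hrot : IsLongestTrail src dst ((e :: r) ++ s) := ht.append_comm hdeg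
  obtain ⟨x, hx⟩ : ∃ x, ((e :: r) ++ s).getLast? = some x := by simp [getLast?_eq_some_getLast]
  have hxe := hrot.dst_getLast_eq_src_head hdeg x hx e (by simp)
  simpa [or_comm, or_left_comm] using hrot.mem_of_src_eq_dst hx (hg.trans hxe.symm)

theorem exists_isTrail_forall_mem
    (hconn : ∀ e g, Relation.ReflTransGen (fun u v => ∃ f, src f = u ∧ dst f = v) (src e) (src g)) :
    ∃ t, IsTrail src dst t ∧ ∀ e, e ∈ t := by
  obtain ⟨t, ht⟩ := exists_isLongestTrail src dst
  refine ⟨t, ht.toIsTrail, fun g => ?_⟩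
  obtain ⟨e, he⟩ : ∃ e, e ∈ t := by
    by_contra! h
    simpa [eq_nil_iff_forall_not_mem.2 h] using
      ht.length_le [g] ⟨nodup_singleton g, isChain_singleton g⟩
  have hreach : ∀ v, Relation.ReflTransGen (fun u v => ∃ f, src f = u ∧ dst f = v) (src e) v →
      ∃ f ∈ t, src f = v := by
    intro v hv
    induction hv with
    | refl => exact ⟨e, he, rfl⟩
    | tail _ hstep ih =>
      obtain ⟨f, hf, hfu⟩ := ih
      obtain ⟨h, rfl, rfl⟩ := hstep
      exact ht.exists_src_eq_dst hdeg (ht.mem_of_src_eq_src hdeg hf hfu.symm)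
  obtain ⟨f, hf, hfg⟩ := hreach _ (hconn e g)
  exact ht.mem_of_src_eq_src hdeg hf hfg.symm

end EulerianTrail

section DeBruijn

open scoped Finset

variable {α : Type*} {m : ℕ}

theorem card_filter_tail_le_card_filter_dropLast [Fintype α] [DecidableEq α] (v : List α) :
    #{e : List.Vector α (m + 1) | e.toList.tail = v} ≤
      #{e : List.Vector α (m + 1) | e.toList.dropLast = v} := by
  refine Finset.card_le_card_of_injOn
    (fun e => (⟨e.toList.rotate 1, by simp⟩ : List.Vector α (m + 1))) ?_ ?_
  · intro e he
    suffices (e.toList.rotate 1).dropLast = v by simpa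
    obtain ⟨a, l, hl⟩ := exists_cons_of_length_eq_add_one e.toList_length
    have he' : e.toList.tail = v := by simpa using he
    rw [← he', hl]
    simp
  · intro e _ f _ hef
    exact List.Vector.toList_injective (rotate_injective 1 (congrArg Subtype.val hef))

theorem reflTransGen_deBruijn : ∀ {u : List α} (w : List α), u.length = m →
    Relation.ReflTransGen
      (fun u v => ∃ e : List.Vector α (m + 1), e.toList.dropLast = u ∧ e.toList.tail = v)
      u ((u ++ w).drop w.length)
  | u, [], _ => by simpa using .refl
  | u, a :: w, hu => by
    have hstep := reflTransGen_deBruijn (u := (u ++ [a]).tail) w (by simp [hu])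
    rw [← tail_append_of_ne_nil (by simp), append_assoc, singleton_append, drop_tail] at hstep
    exact .head ⟨⟨u ++ [a], by simp [hu]⟩, dropLast_concat, rfl⟩ hstep

theorem reflTransGen_deBruijn_dropLast (e g : List.Vector α (m + 1)) :
    Relation.ReflTransGen
      (fun u v => ∃ e : List.Vector α (m + 1), e.toList.dropLast = u ∧ e.toList.tail = v)
      e.toList.dropLast g.toList.dropLast := by
  have h := reflTransGen_deBruijn g.toList.dropLast (by simp : e.toList.dropLast.length = m)
  rwa [drop_left' (by simp)] at h

end DeBruijn

section Spelling

variable {α : Type*} {m : ℕ}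

def spell : List (List α) → List α
  | [] => []
  | [e] => e
  | e :: f :: t => e.take 1 ++ spell (f :: t)

theorem length_spell : ∀ (e : List α) (t : List (List α)), (∀ f ∈ e :: t, f.length = m + 1) →
    (spell (e :: t)).length = m + 1 + t.length
  | e, [], hlen => hlen e mem_cons_self
  | e, f :: t, hlen => by
    have ih := length_spell f t fun g hg => hlen g (mem_cons_of_mem e hg)
    simp only [spell, length_append, length_take, hlen e mem_cons_self, ih, length_cons]
    omega

theorem take_spell : ∀ (e : List α) (t : List (List α)), (∀ f ∈ e :: t, f.length = m + 1) →
    (e :: t).IsChain (fun e f => e.tail = f.dropLast) → (spell (e :: t)).take (m + 1) = e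
  | e, [], hlen, _ => take_of_length_le (hlen e mem_cons_self).le
  | e, f :: t, hlen, hchain => by
    obtain ⟨hef, hchain⟩ := isChain_cons_cons.1 hchain
    have ih := take_spell f t (fun g hg => hlen g (mem_cons_of_mem e hg)) hchain
    have he := hlen e mem_cons_self
    have hf := hlen f (mem_cons_of_mem e mem_cons_self)
    obtain ⟨a, e, rfl⟩ := exists_cons_of_length_eq_add_one he
    calc (spell ((a :: e) :: f :: t)).take (m + 1) = a :: (spell (f :: t)).take m := by
          simp [spell]
      _ = a :: f.dropLast := by
        rw [dropLast_eq_take, hf, Nat.add_sub_cancel]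
        conv_rhs => rw [← ih, take_take, min_eq_left (Nat.le_succ m)]
      _ = a :: e := by rw [← hef, tail_cons]

end Spelling

theorem windows4_cons {n : ℕ} (a : Fin 4) (w : List (Fin 4)) (h : n ≤ w.length + 1) :
    windows4 (a :: w) n = (a :: w).take n :: windows4 w n := by
  unfold windows4
  rw [show (a :: w).length + 1 - n = (w.length + 1 - n) + 1 by simp; omega, range_succ_eq_map]
  simp [Function.comp_def]

theorem windows4_spell {m : ℕ} : ∀ (e : List (Fin 4)) (t : List (List (Fin 4))),
    (∀ f ∈ e :: t, f.length = m + 1) → (e :: t).IsChain (fun e f => e.tail = f.dropLast) →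
    windows4 (spell (e :: t)) (m + 1) = e :: t
  | e, [], hlen, _ => by
    have he := hlen e mem_cons_self
    simp [windows4, spell, he, take_of_length_le]
  | e, f :: t, hlen, hchain => by
    have hlen' : ∀ g ∈ f :: t, g.length = m + 1 := fun g hg => hlen g (mem_cons_of_mem e hg)
    have ih := windows4_spell f t hlen' (isChain_cons_cons.1 hchain).2
    obtain ⟨a, e', rfl⟩ := exists_cons_of_length_eq_add_one (hlen _ mem_cons_self)
    have hspell : spell ((a :: e') :: f :: t) = a :: spell (f :: t) := by simp [spell]
    rw [hspell, windows4_cons _ _ (by rw [length_spell f t hlen']; omega), ih, ← hspell,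
      take_spell _ _ hlen hchain]

theorem stmt_14 (n : ℕ) (hn : 1 ≤ n) :
    ∃ w : List (Fin 4), w.length = 4 ^ n + n - 1 ∧ compl4 w n = 4 ^ n := by
  obtain ⟨m, rfl⟩ : ∃ m, n = m + 1 := ⟨n - 1, by omega⟩
  obtain ⟨t, ht, hall⟩ := exists_isTrail_forall_mem
    (src := fun e : List.Vector (Fin 4) (m + 1) => e.toList.dropLast)
    (dst := fun e => e.toList.tail)
    card_filter_tail_le_card_filter_dropLast reflTransGen_deBruijn_dropLast
  have hcard : t.length = 4 ^ (m + 1) := by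
    classical
    have huniv : t.toFinset = Finset.univ :=
      Finset.eq_univ_of_forall fun e => mem_toFinset.2 (hall e)
    rw [← toFinset_card_of_nodup ht.nodup, huniv, Finset.card_univ, card_vector, Fintype.card_fin]
  obtain ⟨e, t, rfl⟩ := exists_cons_of_ne_nil (ne_nil_of_length_pos (by rw [hcard]; positivity))
  have hlen : ∀ f ∈ (e :: t).map List.Vector.toList, f.length = m + 1 := by simp
  have hchain : ((e :: t).map List.Vector.toList).IsChain (fun e f => e.tail = f.dropLast) :=
    isChain_map _ |>.2 ht.isChain
  refine ⟨spell ((e :: t).map List.Vector.toList), ?_, ?_⟩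
  · rw [map_cons, length_spell _ _ hlen, length_map]
    rw [length_cons] at hcard
    omega
  · rw [compl4, map_cons, windows4_spell _ _ hlen hchain, ← map_cons,
      toFinset_card_of_nodup (ht.nodup.map List.Vector.toList_injective), length_map, hcard]
end
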